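/- arXiv:1406.7345 — 2 statements merged into one kernel-verified Lean document; each statement's English description precedes it below -/
import Mathlib

section
/- Assume (W + log P)₊ ∈ L¹(Λ^N; P d^N x) and V_P ≠ ∅, and set M = sup_{V ∈ V_P} F_P(V), so M ∈ (0, ∞). Let (V_n) be a sequence in V_P with F_P(V_n) → M and Z(V_n) = 1 for every n, and suppose the sequence (e^{−V_n/2}) converges weakly in L²(Λ^N; e^{−W} d^N x) to some Π. Then e^{−V_n/2} converges to Π strongly in L²(Λ^N; e^{−W} d^N x); in particular ∫_{Λ^N} Π² e^{−W} d^N x = 1. -/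
open MeasureTheory Real Filter
open scoped ENNReal

noncomputable section

variable {Λ : Type*} [MeasurableSpace Λ]

/-- The product measure on `Λ^k` (the `k`-fold product of `μ`). -/
def pm (μ : Measure Λ) (k : ℕ) : Measure (Fin k → Λ) := Measure.pi fun _ => μ

/-- A function on `Λ^k` is symmetric if it is invariant under all permutations
of its variables. -/
def IsSymm' {Λ : Type*} (k : ℕ) (f : (Fin k → Λ) → ℝ) : Prop :=
  ∀ σ : Equiv.Perm (Fin k), ∀ x, f (x ∘ σ) = f x

/-- The `m`-sum `Σ_{1 ≤ i₁ < ⋯ < i_m ≤ N} v(x_{i₁},…,x_{i_m})`. -/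
def mSum {Λ : Type*} (N m : ℕ) (v : (Fin m → Λ) → ℝ) (x : Fin N → Λ) : ℝ :=
  ∑ s ∈ Finset.powersetCard m (Finset.univ : Finset (Fin N)),
    if h : s.card = m then v (fun i => x (s.orderEmbOfFin h i)) else 0

/-- `V` has `m`-sum structure with (symmetric, measurable, real-valued) generator `v`. -/
def HasSumStruct (μ : Measure Λ) (N m : ℕ) (V : (Fin N → Λ) → ℝ)
    (v : (Fin m → Λ) → ℝ) : Prop :=
  IsSymm' m v ∧ Measurable v ∧ V =ᵐ[pm μ N] mSum N m v

/-- The measure `P d^N x`. -/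
def Pmeas (μ : Measure Λ) (N : ℕ) (P : (Fin N → Λ) → ℝ) : Measure (Fin N → Λ) :=
  (pm μ N).withDensity fun x => ENNReal.ofReal (P x)

/-- The measure `e^{-W} d^N x`. -/
def Wmeas (μ : Measure Λ) (N : ℕ) (W : (Fin N → Λ) → ℝ) : Measure (Fin N → Λ) :=
  (pm μ N).withDensity fun x => ENNReal.ofReal (Real.exp (-(W x)))

/-- The partition function `Z(V) = ∫ e^{-V-W} d^N x`, as an extended nonnegative real. -/
def ZE (μ : Measure Λ) (N : ℕ) (W V : (Fin N → Λ) → ℝ) : ℝ≥0∞ :=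
  ∫⁻ x, ENNReal.ofReal (Real.exp (-(V x) - W x)) ∂(pm μ N)

/-- The partition function `Z(V)` as a real number. -/
def Zfun (μ : Measure Λ) (N : ℕ) (W V : (Fin N → Λ) → ℝ) : ℝ :=
  (ZE μ N W V).toReal

/-- The functional `F_P(V) = exp(-∫ V P d^N x) / Z(V)`. -/
def FP (μ : Measure Λ) (N : ℕ) (P W V : (Fin N → Λ) → ℝ) : ℝ :=
  Real.exp (-∫ x, V x ∂(Pmeas μ N P)) / Zfun μ N W V

/-- Membership in the set `V_P`. -/
def memVP (μ : Measure Λ) (N m : ℕ) (P W V : (Fin N → Λ) → ℝ) : Prop :=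
  Integrable V (Pmeas μ N P) ∧
  Integrable (fun x => Real.exp (-(V x))) (Wmeas μ N W) ∧
  ∃ v, HasSumStruct μ N m V v

/-- Gluing `(y, z) ∈ Λ^m × Λ^{N-m}` into a point of `Λ^N`. -/
def glue {Λ : Type*} {N m : ℕ} (h : m ≤ N) (y : Fin m → Λ) (z : Fin (N - m) → Λ) :
    Fin N → Λ :=
  fun i => Fin.append y z (Fin.cast (by omega) i)

/-- The `m`-particle reduction `ρ^{(m)}` of `P`. -/
def rho (μ : Measure Λ) (N m : ℕ) (h : m ≤ N) (P : (Fin N → Λ) → ℝ)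
    (y : Fin m → Λ) : ℝ :=
  ∫ z, P (glue h y z) ∂(pm μ (N - m))

/-- The measure `ρ^{(m)} d^m x`. -/
def rhomeas (μ : Measure Λ) (N m : ℕ) (h : m ≤ N) (P : (Fin N → Λ) → ℝ) :
    Measure (Fin m → Λ) :=
  (pm μ m).withDensity fun y => ENNReal.ofReal (rho μ N m h P y)

/-- Membership in the set `V_{ρ^{(m)}}`. -/
def memVrho (μ : Measure Λ) (N m : ℕ) (h : m ≤ N) (P W V : (Fin N → Λ) → ℝ) : Prop :=
  Integrable (fun x => Real.exp (-(V x))) (Wmeas μ N W) ∧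
  ∃ v, HasSumStruct μ N m V v ∧ Integrable v (rhomeas μ N m h P)

/-- The `m`-particle density `ρ_U^{(m)}` associated with the potential `U`. -/
def rhoU (μ : Measure Λ) (N m : ℕ) (h : m ≤ N) (W U : (Fin N → Λ) → ℝ)
    (y : Fin m → Λ) : ℝ :=
  (∫ z, Real.exp (-(W (glue h y z)) - U (glue h y z)) ∂(pm μ (N - m))) / Zfun μ N W U


/-!
Put `u_n = e^{-V_n/2}`; since `Z(V_n) = 1` these are unit vectors of `L²(e^{-W} d^N x)`.
The midpoint `(V_n + V_k)/2` is again in `V_P`, its partition function is `⟨u_n, u_k⟩` and the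
`P`-average of it is the mean of those of `V_n`, `V_k`, so `F_P((V_n + V_k)/2) ≤ M` reads
`⟨u_n, u_k⟩ ≥ √(F_P(V_n) F_P(V_k)) / M → 1`. Hence `‖u_n - u_k‖² = 2 - 2⟨u_n, u_k⟩ → 0`: the
sequence is Cauchy, its strong limit must be the weak limit `Φ`, and `‖Φ‖ = 1`.
-/

open scoped RealInnerProductSpace

section InnerProductSpace

variable {E : Type*} [NormedAddCommGroup E] [InnerProductSpace ℝ E]

theorem cauchySeq_of_norm_eq_one_of_le_inner {u : ℕ → E} (hu : ∀ n, ‖u n‖ = 1)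
    {c : ℕ × ℕ → ℝ} (hc : Tendsto c atTop (nhds 1)) (hle : ∀ p, c p ≤ ⟪u p.1, u p.2⟫) :
    CauchySeq u := by
  have hinner : Tendsto (fun p : ℕ × ℕ => ⟪u p.1, u p.2⟫) atTop (nhds 1) :=
    tendsto_of_tendsto_of_tendsto_of_le_of_le hc tendsto_const_nhds hle fun p => by
      simpa [hu] using real_inner_le_norm (u p.1) (u p.2)
  have hdist : ∀ p : ℕ × ℕ, dist (u p.1) (u p.2) = √(2 - 2 * ⟪u p.1, u p.2⟫) := fun p => by
    rw [dist_eq_norm, ← Real.sqrt_sq (norm_nonneg _), norm_sub_sq_real, hu, hu]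
    ring_nf
  rw [cauchySeq_iff_tendsto_dist_atTop_0, funext hdist]
  simpa using (tendsto_const_nhds (x := (2 : ℝ)) |>.sub (hinner.const_mul 2)).sqrt

theorem CauchySeq.tendsto_of_tendsto_inner [CompleteSpace E] {u : ℕ → E} {φ : E}
    (hu : CauchySeq u) (hweak : ∀ f, Tendsto (fun n => ⟪u n, f⟫) atTop (nhds ⟪φ, f⟫)) :
    Tendsto u atTop (nhds φ) := by
  obtain ⟨g, hg⟩ := cauchySeq_tendsto_of_complete hu
  obtain rfl : g = φ := ext_inner_right ℝ fun f =>
    tendsto_nhds_unique (hg.inner tendsto_const_nhds) (hweak f)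
  exact hg

end InnerProductSpace

section L2

variable {α : Type*} [MeasurableSpace α] {ν : Measure α}

theorem MeasureTheory.MemLp.inner_toLp_toLp {f g : α → ℝ} (hf : MemLp f 2 ν)
    (hg : MemLp g 2 ν) : ⟪hf.toLp f, hg.toLp g⟫ = ∫ x, f x * g x ∂ν := by
  rw [L2.inner_def]
  refine integral_congr_ae ?_
  filter_upwards [hf.coeFn_toLp, hg.coeFn_toLp] with x hfx hgx
  simp [hfx, hgx, mul_comm]

theorem memLp_two_exp_half {f : α → ℝ} (hf : Integrable (fun x => exp (f x)) ν) :
    MemLp (fun x => exp (f x / 2)) 2 ν := by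
  have hmeas : AEStronglyMeasurable (fun x => exp (f x / 2)) ν := by
    simp_rw [Real.exp_half]
    exact continuous_sqrt.comp_aestronglyMeasurable hf.1
  rw [memLp_two_iff_integrable_sq hmeas]
  simpa [sq, ← Real.exp_add] using hf

end L2

omit [MeasurableSpace Λ] in
theorem mSum_add_div_two {N m : ℕ} (v₁ v₂ : (Fin m → Λ) → ℝ) (x : Fin N → Λ) :
    mSum N m (fun y => (v₁ y + v₂ y) / 2) x = (mSum N m v₁ x + mSum N m v₂ x) / 2 := by
  unfold mSum
  rw [← Finset.sum_add_distrib, Finset.sum_div]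
  refine Finset.sum_congr rfl fun s _ => ?_
  by_cases h : s.card = m <;> simp [h]

section Potentials

variable {μ : Measure Λ} {N m : ℕ} {P W V₁ V₂ : (Fin N → Λ) → ℝ}

theorem HasSumStruct.add_div_two {v₁ v₂ : (Fin m → Λ) → ℝ} (h₁ : HasSumStruct μ N m V₁ v₁)
    (h₂ : HasSumStruct μ N m V₂ v₂) :
    HasSumStruct μ N m (fun x => (V₁ x + V₂ x) / 2) (fun y => (v₁ y + v₂ y) / 2) := by
  obtain ⟨hsymm₁, hmeas₁, hae₁⟩ := h₁
  obtain ⟨hsymm₂, hmeas₂, hae₂⟩ := h₂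
  refine ⟨fun σ y => by simp only [hsymm₁ σ y, hsymm₂ σ y], (hmeas₁.add hmeas₂).div_const 2, ?_⟩
  filter_upwards [hae₁, hae₂] with x hx₁ hx₂
  rw [mSum_add_div_two, hx₁, hx₂]

theorem exp_neg_add_div_two (a b : ℝ) : exp (-((a + b) / 2)) = exp (-a / 2) * exp (-b / 2) := by
  rw [← Real.exp_add]
  ring_nf

theorem memVP.add_div_two (h₁ : memVP μ N m P W V₁) (h₂ : memVP μ N m P W V₂) :
    memVP μ N m P W (fun x => (V₁ x + V₂ x) / 2) := by
  obtain ⟨hP₁, hW₁, v₁, hv₁⟩ := h₁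
  obtain ⟨hP₂, hW₂, v₂, hv₂⟩ := h₂
  refine ⟨(hP₁.add hP₂).div_const 2, ?_, _, hv₁.add_div_two hv₂⟩
  simp_rw [exp_neg_add_div_two]
  exact (memLp_two_exp_half hW₁).integrable_mul (memLp_two_exp_half hW₂)

theorem Zfun_eq_integral (hW : Measurable W) {U : (Fin N → Λ) → ℝ}
    (hU : Integrable (fun x => exp (-(U x))) (Wmeas μ N W)) :
    Zfun μ N W U = ∫ x, exp (-(U x)) ∂(Wmeas μ N W) := by
  have hZE : ZE μ N W U = ∫⁻ x, ENNReal.ofReal (exp (-(U x))) ∂(Wmeas μ N W) := by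
    rw [Wmeas, lintegral_withDensity_eq_lintegral_mul₀' (by fun_prop)
      (g := fun x => ENNReal.ofReal (exp (-(U x)))) hU.1.aemeasurable.ennreal_ofReal]
    refine lintegral_congr fun x => ?_
    rw [Pi.mul_apply, ← ENNReal.ofReal_mul (exp_nonneg _), ← Real.exp_add, neg_add_eq_sub]
  rw [Zfun, hZE, integral_eq_lintegral_of_nonneg_ae (ae_of_all _ fun x => (exp_pos _).le) hU.1]

theorem integral_exp_neg_eq_one (hW : Measurable W) {U : (Fin N → Λ) → ℝ}
    (hU : Integrable (fun x => exp (-(U x))) (Wmeas μ N W)) (hZ : ZE μ N W U = 1) :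
    ∫ x, exp (-(U x)) ∂(Wmeas μ N W) = 1 := by
  rw [← Zfun_eq_integral hW hU, Zfun, hZ, ENNReal.toReal_one]

theorem FP_eq_of_ZE_eq_one {V : (Fin N → Λ) → ℝ} (hZ : ZE μ N W V = 1) :
    FP μ N P W V = exp (-∫ x, V x ∂(Pmeas μ N P)) := by
  simp [FP, Zfun, hZ]

theorem FP_add_div_two (hW : Measurable W) (h₁ : memVP μ N m P W V₁)
    (h₂ : memVP μ N m P W V₂) (hZ₁ : ZE μ N W V₁ = 1) (hZ₂ : ZE μ N W V₂ = 1) :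
    FP μ N P W (fun x => (V₁ x + V₂ x) / 2) =
      √(FP μ N P W V₁ * FP μ N P W V₂) /
        ∫ x, exp (-(V₁ x) / 2) * exp (-(V₂ x) / 2) ∂(Wmeas μ N W) := by
  rw [FP, Zfun_eq_integral hW (h₁.add_div_two h₂).2.1, FP_eq_of_ZE_eq_one hZ₁,
    FP_eq_of_ZE_eq_one hZ₂, integral_div, integral_add h₁.1 h₂.1, ← Real.exp_add, ← exp_half]
  simp_rw [exp_neg_add_div_two, ← Real.exp_add]
  ring_nf

theorem sqrt_FP_mul_FP_le (hW : Measurable W) {M : ℝ}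
    (hM : ∀ V, memVP μ N m P W V → FP μ N P W V ≤ M) (h₁ : memVP μ N m P W V₁)
    (h₂ : memVP μ N m P W V₂) (hZ₁ : ZE μ N W V₁ = 1) (hZ₂ : ZE μ N W V₂ = 1) :
    √(FP μ N P W V₁ * FP μ N P W V₂) ≤
      M * ∫ x, exp (-(V₁ x) / 2) * exp (-(V₂ x) / 2) ∂(Wmeas μ N W) := by
  have hmid := h₁.add_div_two h₂
  have : NeZero (Wmeas μ N W) := ⟨fun h0 => by
    simpa [h0] using integral_exp_neg_eq_one hW h₁.2.1 hZ₁⟩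
  have hpos : 0 < ∫ x, exp (-(V₁ x) / 2) * exp (-(V₂ x) / 2) ∂(Wmeas μ N W) := by
    simp_rw [← exp_neg_add_div_two]
    exact integral_exp_pos hmid.2.1
  have := hM _ hmid
  rwa [FP_add_div_two hW h₁ h₂ hZ₁ hZ₂, div_le_iff₀ hpos] at this

end Potentials

theorem statement8_general (μ : Measure Λ)
    (N m : ℕ)
    (P W : (Fin N → Λ) → ℝ)
    (hWmeas : Measurable W)
    (M : ℝ)
    (hM : IsLUB {r : ℝ | ∃ V, memVP μ N m P W V ∧ FP μ N P W V = r} M)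
    (V : ℕ → (Fin N → Λ) → ℝ)
    (hVn : ∀ n, memVP μ N m P W (V n))
    (hZn : ∀ n, ZE μ N W (V n) = 1)
    (hmaxseq : Tendsto (fun n => FP μ N P W (V n)) atTop (nhds M))
    (Φ : (Fin N → Λ) → ℝ) (hΦ : MemLp Φ 2 (Wmeas μ N W))
    (hweak : ∀ g : (Fin N → Λ) → ℝ, MemLp g 2 (Wmeas μ N W) →
      Tendsto (fun n => ∫ x, Real.exp (-(V n x) / 2) * g x ∂(Wmeas μ N W)) atTop
        (nhds (∫ x, Φ x * g x ∂(Wmeas μ N W)))) :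
    0 < M ∧
    Tendsto (fun n => eLpNorm (fun x => Real.exp (-(V n x) / 2) - Φ x) 2 (Wmeas μ N W))
      atTop (nhds 0) ∧
    ∫ x, (Φ x) ^ 2 ∂(Wmeas μ N W) = 1 := by
  have hupper : ∀ U, memVP μ N m P W U → FP μ N P W U ≤ M := fun U hU => hM.1 ⟨U, hU, rfl⟩
  have hM0 : 0 < M := by
    have := hupper _ (hVn 0)
    rw [FP_eq_of_ZE_eq_one (hZn 0)] at this
    exact (exp_pos _).trans_le this
  have hmem n := memLp_two_exp_half (hVn n).2.1
  set u : ℕ → Lp ℝ 2 (Wmeas μ N W) := fun n => (hmem n).toLp _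
  set φ := hΦ.toLp Φ
  have hnorm n : ‖u n‖ = 1 := by
    rw [← pow_eq_one_iff_of_nonneg (norm_nonneg _) two_ne_zero, ← real_inner_self_eq_norm_sq,
      MemLp.inner_toLp_toLp]
    simp_rw [← Real.exp_add, add_halves]
    exact integral_exp_neg_eq_one hWmeas (hVn n).2.1 (hZn n)
  have hc : Tendsto (fun p : ℕ × ℕ => √(FP μ N P W (V p.1) * FP μ N P W (V p.2)) / M)
      atTop (nhds 1) := by
    rw [← prod_atTop_atTop_eq]
    have := ((hmaxseq.comp tendsto_fst).mul (hmaxseq.comp tendsto_snd)).sqrt.div_const M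
    rwa [sqrt_mul_self hM0.le, div_self hM0.ne'] at this
  have hcauchy : CauchySeq u := cauchySeq_of_norm_eq_one_of_le_inner hnorm hc fun p => by
    rw [MemLp.inner_toLp_toLp, div_le_iff₀' hM0]
    exact sqrt_FP_mul_FP_le hWmeas hupper (hVn _) (hVn _) (hZn _) (hZn _)
  have hconv : Tendsto u atTop (nhds φ) := hcauchy.tendsto_of_tendsto_inner fun f => by
    rw [← Lp.toLp_coeFn f (Lp.memLp f)]
    simp only [u, φ, MemLp.inner_toLp_toLp]
    exact hweak f (Lp.memLp f)
  have hφ : ‖φ‖ = 1 := tendsto_nhds_unique ((continuous_norm.tendsto φ).comp hconv)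
    (by simp [Function.comp_def, hnorm])
  refine ⟨hM0, (Lp.tendsto_Lp_iff_tendsto_eLpNorm'' _ hmem Φ hΦ).1 hconv, ?_⟩
  simpa [sq, hφ] using (MemLp.inner_toLp_toLp hΦ hΦ).symm.trans (real_inner_self_eq_norm_sq φ)

/-- Let `M = sup_{V ∈ V_P} F_P(V)` (so `0 < M`).  If `(V_n)` is a
maximizing sequence in `V_P` with `Z(V_n) = 1` and `(e^{-V_n/2})` converges weakly in
`L²(Λ^N; e^{-W} d^N x)` to some `Φ`, then `e^{-V_n/2} → Φ` strongly in
`L²(Λ^N; e^{-W} d^N x)`; in particular `∫ Φ² e^{-W} d^N x = 1`. -/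
theorem statement8 (μ : Measure Λ) [SigmaFinite μ] (hμ : μ ≠ 0)
    (N m : ℕ) (hN : 2 ≤ N) (hm : 1 ≤ m) (hmN : m ≤ N)
    (P W : (Fin N → Λ) → ℝ) (hPmeas : Measurable P)
    (hPprob : ∫⁻ x, ENNReal.ofReal (P x) ∂(pm μ N) = 1)
    (hPpos : ∀ᵐ x ∂(pm μ N), 0 < P x)
    (hWmeas : Measurable W)
    (hWlogP : Integrable (fun x => max (W x + Real.log (P x)) 0) (Pmeas μ N P))
    (M : ℝ)
    (hM : IsLUB {r : ℝ | ∃ V, memVP μ N m P W V ∧ FP μ N P W V = r} M)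
    (V : ℕ → (Fin N → Λ) → ℝ)
    (hVn : ∀ n, memVP μ N m P W (V n))
    (hZn : ∀ n, ZE μ N W (V n) = 1)
    (hmaxseq : Tendsto (fun n => FP μ N P W (V n)) atTop (nhds M))
    (Φ : (Fin N → Λ) → ℝ) (hΦ : MemLp Φ 2 (Wmeas μ N W))
    (hweak : ∀ g : (Fin N → Λ) → ℝ, MemLp g 2 (Wmeas μ N W) →
      Tendsto (fun n => ∫ x, Real.exp (-(V n x) / 2) * g x ∂(Wmeas μ N W)) atTop
        (nhds (∫ x, Φ x * g x ∂(Wmeas μ N W)))) :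
    0 < M ∧
    Tendsto (fun n => eLpNorm (fun x => Real.exp (-(V n x) / 2) - Φ x) 2 (Wmeas μ N W))
      atTop (nhds 0) ∧
    ∫ x, (Φ x) ^ 2 ∂(Wmeas μ N W) = 1 :=
  statement8_general μ N m P W hWmeas M hM V hVn hZn hmaxseq Φ hΦ hweak
end
end

section
/- Let U, V ∈ V_{ρ^(m)}. Then for every ε > 0 there exists a bounded symmetric measurable function ξ : Λ^m → ℝ such that, with Ξ(x₁,…,x_N) = Σ_{1≤i₁<⋯<i_m≤N} ξ(x_{i₁},…,x_{i_m}), one has U + Ξ ∈ V_{ρ^(m)} and |F_P(V) − F_P(U + Ξ)| < ε. -/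
open MeasureTheory Real Filter
open scoped ENNReal

noncomputable section

variable {Λ : Type*} [MeasurableSpace Λ]

/-!
By symmetry of `P`, every choice of `m` of the `N` coordinates pushes `P d^N x` forward to
`ρ^(m) d^m x`, so `∫ (Σ t) P = C(N,m) ∫ t ρ^(m)` and `F_P(Σ t) = exp(-C(N,m) ∫ t ρ^(m)) / Z(Σ t)`.
Both factors are continuous, by dominated convergence, along generators converging pointwise
with a `ρ^(m)`-integrable majorant once `e^{-Σ t - W}` is dominated by an integrable function.
With `U = Σ u`, `V = Σ v`, truncate `w = v - u` first from below at `-b`, then from above at `a`.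
Truncating from below only raises the potential, so `e^{-V-W}` dominates as `b → ∞`; after it,
`u + min (max w (-b)) a ≥ u - b`, so `e^{C(N,m) b} e^{-U-W}` dominates as `a → ∞`.
-/

open scoped Topology

instance sigmaFinite_pm (μ : Measure Λ) [SigmaFinite μ] (k : ℕ) : SigmaFinite (pm μ k) := by
  unfold pm; infer_instance

section mSum

variable {Λ : Type*} {N m : ℕ}

lemma mSum_add (v u : (Fin m → Λ) → ℝ) (x : Fin N → Λ) :
    mSum N m (fun y => v y + u y) x = mSum N m v x + mSum N m u x := by
  simp only [mSum, ← Finset.sum_add_distrib]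
  exact Finset.sum_congr rfl fun s _ => by split_ifs <;> simp

lemma mSum_mono {v u : (Fin m → Λ) → ℝ} (h : ∀ y, v y ≤ u y) (x : Fin N → Λ) :
    mSum N m v x ≤ mSum N m u x :=
  Finset.sum_le_sum fun s _ => by split_ifs <;> simp [h]

lemma mSum_const (r : ℝ) (x : Fin N → Λ) : mSum N m (fun _ => r) x = N.choose m * r := by
  rw [mSum, Finset.sum_congr rfl fun s hs => dif_pos (Finset.mem_powersetCard.mp hs).2,
    Finset.sum_const, Finset.card_powersetCard, Finset.card_univ, Fintype.card_fin, nsmul_eq_mul]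

lemma tendsto_mSum {ι : Type*} {l : Filter ι} {t : ι → (Fin m → Λ) → ℝ} {v : (Fin m → Λ) → ℝ}
    (h : ∀ y, Tendsto (fun k => t k y) l (𝓝 (v y))) (x : Fin N → Λ) :
    Tendsto (fun k => mSum N m (t k) x) l (𝓝 (mSum N m v x)) :=
  tendsto_finsetSum _ fun s _ => by split_ifs; exacts [h _, tendsto_const_nhds]

lemma measurable_mSum [MeasurableSpace Λ] {v : (Fin m → Λ) → ℝ} (hv : Measurable v) :
    Measurable (mSum N m v) :=
  Finset.measurable_sum _ fun s _ => by split_ifs; exacts [hv.comp (by fun_prop), measurable_const]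

end mSum

lemma exists_perm_apply_eq_of_injective {α β : Type*} [Finite β] {f g : α → β}
    (hf : Function.Injective f) (hg : Function.Injective g) :
    ∃ σ : Equiv.Perm β, ∀ i, σ (f i) = g i := by
  classical
  let e : {b // b ∈ Set.range f} ≃ {b // b ∈ Set.range g} :=
    (Equiv.ofInjective f hf).symm.trans (Equiv.ofInjective g hg)
  refine ⟨e.extendSubtype, fun i => ?_⟩
  rw [Equiv.extendSubtype_apply_of_mem e _ ⟨i, rfl⟩]
  simp [e]

section withDensity

variable {α β : Type*} [MeasurableSpace α] [MeasurableSpace β]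

lemma MeasureTheory.MeasurePreserving.map_withDensity_comp {μ : Measure α} {ν : Measure β}
    {e : α → β} (he : MeasurePreserving e μ ν) {f : β → ℝ≥0∞} (hf : Measurable f) :
    (μ.withDensity (f ∘ e)).map e = ν.withDensity f := by
  ext s hs
  rw [Measure.map_apply he.measurable hs, withDensity_apply _ (he.measurable hs),
    withDensity_apply _ hs]
  exact he.setLIntegral_comp_preimage hs hf

lemma map_fst_withDensity (μ : Measure α) (ν : Measure β) [SFinite μ] [SFinite ν]
    {g : α × β → ℝ≥0∞} (hg : Measurable g) :
    ((μ.prod ν).withDensity g).map Prod.fst = μ.withDensity fun a => ∫⁻ b, g (a, b) ∂ν := by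
  ext s hs
  rw [Measure.map_apply measurable_fst hs, withDensity_apply _ (measurable_fst hs),
    withDensity_apply _ hs, ← Set.prod_univ, ← Measure.prod_restrict, Measure.restrict_univ,
    lintegral_prod _ hg.aemeasurable]

end withDensity

lemma measurePreserving_comp_perm {ι : Type*} [Fintype ι] (μ : Measure Λ) [SigmaFinite μ]
    (σ : Equiv.Perm ι) :
    MeasurePreserving (fun x : ι → Λ => x ∘ σ) (Measure.pi fun _ => μ)
      (Measure.pi fun _ => μ) := by
  convert measurePreserving_arrowCongr' (fun _ => μ) (fun _ => μ) σ.symm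
    (MeasurableEquiv.refl Λ) fun _ => MeasurePreserving.id μ
  ext x
  simp [MeasurableEquiv.arrowCongr', Equiv.arrowCongr']

lemma measurePreserving_glue (μ : Measure Λ) [SigmaFinite μ] {N m : ℕ} (h : m ≤ N) :
    MeasurePreserving (fun p : (Fin m → Λ) × (Fin (N - m) → Λ) => glue h p.1 p.2)
      ((pm μ m).prod (pm μ (N - m))) (pm μ N) := by
  let e : Fin m ⊕ Fin (N - m) ≃ Fin N := finSumFinEquiv.trans (finCongr (by omega))
  unfold pm
  convert (measurePreserving_piCongrLeft (fun _ : Fin N => μ) e).comp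
    (measurePreserving_sumPiEquivProdPi_symm fun _ : Fin m ⊕ Fin (N - m) => μ) using 1
  funext p i
  obtain ⟨s, rfl⟩ := e.surjective i
  rw [Function.comp_apply, MeasurableEquiv.piCongrLeft_apply_apply]
  rcases s with j | j <;> simp [glue, e, MeasurableEquiv.coe_sumPiEquivProdPi_symm]

lemma pm_ne_zero {μ : Measure Λ} [SigmaFinite μ] (hμ : μ ≠ 0) (k : ℕ) : pm μ k ≠ 0 := by
  rw [← Measure.measure_univ_ne_zero, pm, Measure.pi_univ]
  exact Finset.prod_ne_zero_iff.mpr fun _ _ => Measure.measure_univ_ne_zero.mpr hμ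

section Density

variable (μ : Measure Λ) [SigmaFinite μ] {N m : ℕ} {P : (Fin N → Λ) → ℝ}

lemma map_comp_perm_Pmeas (hPmeas : Measurable P) {σ : Equiv.Perm (Fin N)}
    (hσ : ∀ᵐ x ∂(pm μ N), P (x ∘ σ) = P x) :
    (Pmeas μ N P).map (fun x => x ∘ σ) = Pmeas μ N P := by
  have hdens : (fun x => ENNReal.ofReal (P x)) =ᵐ[pm μ N]
      (fun x => ENNReal.ofReal (P x)) ∘ fun x => x ∘ σ :=
    hσ.mono fun x hx => congrArg ENNReal.ofReal hx.symm
  calc (Pmeas μ N P).map (fun x => x ∘ σ)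
      = ((pm μ N).withDensity ((fun x => ENNReal.ofReal (P x)) ∘ fun x => x ∘ σ)).map
          (fun x => x ∘ σ) := by rw [Pmeas, withDensity_congr_ae hdens]
    _ = Pmeas μ N P :=
        (measurePreserving_comp_perm μ σ).map_withDensity_comp hPmeas.ennreal_ofReal

lemma ofReal_rho_ae_eq (hmN : m ≤ N) (hPmeas : Measurable P)
    (hPfin : ∫⁻ x, ENNReal.ofReal (P x) ∂(pm μ N) ≠ ∞)
    (hPnonneg : ∀ᵐ x ∂(pm μ N), 0 ≤ P x) :
    (fun y => ENNReal.ofReal (rho μ N m hmN P y)) =ᵐ[pm μ m]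
      fun y => ∫⁻ z, ENNReal.ofReal (P (glue hmN y z)) ∂(pm μ (N - m)) := by
  have hglue := measurePreserving_glue μ hmN
  have hPg : Measurable fun p : (Fin m → Λ) × (Fin (N - m) → Λ) => P (glue hmN p.1 p.2) :=
    hPmeas.comp hglue.measurable
  have hfin : ∀ᵐ y ∂pm μ m, ∫⁻ z, ENNReal.ofReal (P (glue hmN y z)) ∂pm μ (N - m) < ∞ := by
    refine ae_lt_top hPg.ennreal_ofReal.lintegral_prod_right' ?_
    rwa [← lintegral_prod _ hPg.ennreal_ofReal.aemeasurable,
      hglue.lintegral_comp (f := fun x => ENNReal.ofReal (P x)) hPmeas.ennreal_ofReal]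
  have hnonneg : ∀ᵐ y ∂pm μ m, ∀ᵐ z ∂pm μ (N - m), 0 ≤ P (glue hmN y z) :=
    Measure.ae_ae_of_ae_prod (hglue.quasiMeasurePreserving.ae hPnonneg)
  -- `rho` is a Bochner integral, so it only agrees with the lintegral where `P (glue y ·)` is
  -- integrable, which finite mass gives for a.e. `y`.
  filter_upwards [hfin, hnonneg] with y hy hy0
  exact ofReal_integral_eq_lintegral_ofReal
    ⟨(hPg.comp measurable_prodMk_left).aestronglyMeasurable,
      (hasFiniteIntegral_iff_ofReal hy0).mpr hy⟩ hy0

lemma map_castLE_Pmeas (hmN : m ≤ N) (hPmeas : Measurable P)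
    (hPfin : ∫⁻ x, ENNReal.ofReal (P x) ∂(pm μ N) ≠ ∞)
    (hPnonneg : ∀ᵐ x ∂(pm μ N), 0 ≤ P x) :
    (Pmeas μ N P).map (fun x i => x (Fin.castLE hmN i)) = rhomeas μ N m hmN P := by
  have hglue := measurePreserving_glue μ hmN
  have hsel : (fun x : Fin N → Λ => fun i => x (Fin.castLE hmN i)) ∘
      (fun p : (Fin m → Λ) × (Fin (N - m) → Λ) => glue hmN p.1 p.2) = Prod.fst := by
    funext p i
    simp [glue]
  rw [Pmeas, ← hglue.map_withDensity_comp hPmeas.ennreal_ofReal,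
    Measure.map_map (by fun_prop) hglue.measurable, hsel,
    map_fst_withDensity _ _ (hPmeas.ennreal_ofReal.comp hglue.measurable)]
  exact withDensity_congr_ae (ofReal_rho_ae_eq μ hmN hPmeas hPfin hPnonneg).symm

end Density

structure IsSymmDensity (μ : Measure Λ) (N : ℕ) (P : (Fin N → Λ) → ℝ) : Prop where
  measurable : Measurable P
  lintegral_ne_top : ∫⁻ x, ENNReal.ofReal (P x) ∂(pm μ N) ≠ ∞
  ae_nonneg : ∀ᵐ x ∂(pm μ N), 0 ≤ P x
  symm : ∀ σ : Equiv.Perm (Fin N), ∀ᵐ x ∂(pm μ N), P (x ∘ σ) = P x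

section Reduction

variable {μ : Measure Λ} [SigmaFinite μ] {N m : ℕ} (hmN : m ≤ N) {P : (Fin N → Λ) → ℝ}

lemma IsSymmDensity.map_comp_injective (hP : IsSymmDensity μ N P) {f : Fin m → Fin N}
    (hf : Function.Injective f) :
    (Pmeas μ N P).map (fun x => x ∘ f) = rhomeas μ N m hmN P := by
  obtain ⟨σ, hσ⟩ := exists_perm_apply_eq_of_injective (Fin.castLE_injective hmN) hf
  have hsplit : (fun x : Fin N → Λ => x ∘ f) =
      (fun x i => x (Fin.castLE hmN i)) ∘ fun x => x ∘ σ := by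
    funext x i
    simp [hσ]
  rw [hsplit, ← Measure.map_map (by fun_prop) (by fun_prop),
    map_comp_perm_Pmeas μ hP.measurable (hP.symm σ),
    map_castLE_Pmeas μ hmN hP.measurable hP.lintegral_ne_top hP.ae_nonneg]

lemma IsSymmDensity.integrable_comp_orderEmbOfFin (hP : IsSymmDensity μ N P)
    {t : (Fin m → Λ) → ℝ} (ht : Integrable t (rhomeas μ N m hmN P)) {s : Finset (Fin N)}
    (hs : s.card = m) :
    Integrable (fun x => t fun i => x (s.orderEmbOfFin hs i)) (Pmeas μ N P) := by
  rw [← hP.map_comp_injective hmN (s.orderEmbOfFin hs).injective] at ht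
  exact ht.comp_measurable (by fun_prop)

lemma IsSymmDensity.integral_comp_orderEmbOfFin (hP : IsSymmDensity μ N P)
    {t : (Fin m → Λ) → ℝ} (ht : Integrable t (rhomeas μ N m hmN P)) {s : Finset (Fin N)}
    (hs : s.card = m) :
    ∫ x, t (fun i => x (s.orderEmbOfFin hs i)) ∂(Pmeas μ N P) =
      ∫ y, t y ∂(rhomeas μ N m hmN P) := by
  rw [← hP.map_comp_injective hmN (s.orderEmbOfFin hs).injective] at ht ⊢
  exact (integral_map (Measurable.aemeasurable (by fun_prop)) ht.aestronglyMeasurable).symm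

lemma IsSymmDensity.integral_mSum (hP : IsSymmDensity μ N P) {t : (Fin m → Λ) → ℝ}
    (ht : Integrable t (rhomeas μ N m hmN P)) :
    ∫ x, mSum N m t x ∂(Pmeas μ N P) = N.choose m * ∫ y, t y ∂(rhomeas μ N m hmN P) := by
  have hcard : ∀ s ∈ Finset.powersetCard m (Finset.univ : Finset (Fin N)), s.card = m :=
    fun s hs => (Finset.mem_powersetCard.mp hs).2
  unfold mSum
  rw [integral_finsetSum _ fun s hs => by
      simpa only [dif_pos (hcard s hs)] using hP.integrable_comp_orderEmbOfFin hmN ht (hcard s hs),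
    Finset.sum_congr rfl fun s hs => by
      simpa only [dif_pos (hcard s hs)] using hP.integral_comp_orderEmbOfFin hmN ht (hcard s hs),
    Finset.sum_const, Finset.card_powersetCard, Finset.card_univ, Fintype.card_fin, nsmul_eq_mul]

end Reduction

section PartitionFunction

variable {μ : Measure Λ} {N : ℕ} {W : (Fin N → Λ) → ℝ}

lemma ZE_congr {f g : (Fin N → Λ) → ℝ} (h : f =ᵐ[pm μ N] g) : ZE μ N W f = ZE μ N W g :=
  lintegral_congr_ae (h.mono fun x hx => by simp only [hx])

lemma FP_congr (P : (Fin N → Λ) → ℝ) {f g : (Fin N → Λ) → ℝ} (h : f =ᵐ[pm μ N] g) :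
    FP μ N P W f = FP μ N P W g := by
  rw [FP, FP, Zfun, Zfun, ZE_congr h,
    integral_congr_ae (μ := Pmeas μ N P) ((withDensity_absolutelyContinuous _ _).ae_eq h)]

lemma ZE_ne_top (hWmeas : Measurable W) {V : (Fin N → Λ) → ℝ}
    (hV : Integrable (fun x => exp (-V x)) (Wmeas μ N W)) : ZE μ N W V ≠ ∞ := by
  have h := hV.2.ne
  rw [Wmeas, lintegral_withDensity_eq_lintegral_mul₀' (by fun_prop) hV.1.enorm] at h
  convert h using 1
  refine lintegral_congr fun x => ?_
  rw [Pi.mul_apply, Real.enorm_eq_ofReal (exp_pos _).le, ← ENNReal.ofReal_mul (exp_pos _).le,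
    ← exp_add, add_comm, ← sub_eq_add_neg]

lemma ZE_ne_zero [SigmaFinite μ] (hμ : μ ≠ 0) (hWmeas : Measurable W) {V : (Fin N → Λ) → ℝ}
    (hV : Measurable V) : ZE μ N W V ≠ 0 := by
  have : NeZero (pm μ N) := ⟨pm_ne_zero hμ N⟩
  rw [ZE, Ne, lintegral_eq_zero_iff (by fun_prop)]
  intro h
  obtain ⟨x, hx⟩ := h.exists
  exact (exp_pos _).not_ge (ENNReal.ofReal_eq_zero.mp hx)

end PartitionFunction

section Continuity

variable {μ : Measure Λ} [SigmaFinite μ] {N m : ℕ} (hmN : m ≤ N) {P : (Fin N → Λ) → ℝ}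

lemma IsSymmDensity.FP_mSum (hP : IsSymmDensity μ N P) (W : (Fin N → Λ) → ℝ)
    {t : (Fin m → Λ) → ℝ} (ht : Integrable t (rhomeas μ N m hmN P)) :
    FP μ N P W (mSum N m t) =
      exp (-(N.choose m * ∫ y, t y ∂(rhomeas μ N m hmN P))) / (ZE μ N W (mSum N m t)).toReal := by
  rw [FP, Zfun, hP.integral_mSum hmN ht]

theorem IsSymmDensity.tendsto_FP_mSum (hP : IsSymmDensity μ N P) (hμ : μ ≠ 0)
    {W : (Fin N → Λ) → ℝ} (hWmeas : Measurable W)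
    {ι : Type*} {l : Filter ι} [l.IsCountablyGenerated] [l.NeBot]
    {t : ι → (Fin m → Λ) → ℝ} {v : (Fin m → Λ) → ℝ} (htm : ∀ k, Measurable (t k))
    (ht : ∀ k, Integrable (t k) (rhomeas μ N m hmN P)) (hv : Integrable v (rhomeas μ N m hmN P))
    (hlim : ∀ y, Tendsto (fun k => t k y) l (𝓝 (v y)))
    {G : (Fin m → Λ) → ℝ} (hG : Integrable G (rhomeas μ N m hmN P))
    (hGbound : ∀ k y, |t k y| ≤ G y)
    {D : (Fin N → Λ) → ℝ≥0∞} (hD : ∫⁻ x, D x ∂(pm μ N) ≠ ∞)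
    (hDbound : ∀ k x, ENNReal.ofReal (exp (-mSum N m (t k) x - W x)) ≤ D x) :
    Tendsto (fun k => FP μ N P W (mSum N m (t k))) l (𝓝 (FP μ N P W (mSum N m v))) := by
  have hvm : Measurable v := measurable_of_tendsto_metrizable' l htm (tendsto_pi_nhds.mpr hlim)
  have hZ : Tendsto (fun k => ZE μ N W (mSum N m (t k))) l (𝓝 (ZE μ N W (mSum N m v))) :=
    tendsto_lintegral_filter_of_dominated_convergence D
      (.of_forall fun k => ((measurable_mSum (htm k)).neg.sub hWmeas).exp.ennreal_ofReal)
      (.of_forall fun k => .of_forall (hDbound k)) hD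
      (.of_forall fun x => ENNReal.tendsto_ofReal ((tendsto_mSum hlim x).neg.sub_const _).rexp)
  have hZ_ne_top : ZE μ N W (mSum N m v) ≠ ∞ :=
    ne_top_of_le_ne_top hD (le_of_tendsto' hZ fun k => lintegral_mono (hDbound k))
  have hZ_ne_zero : ZE μ N W (mSum N m v) ≠ 0 := ZE_ne_zero hμ hWmeas (measurable_mSum hvm)
  have hint : Tendsto (fun k => ∫ y, t k y ∂(rhomeas μ N m hmN P)) l
      (𝓝 (∫ y, v y ∂(rhomeas μ N m hmN P))) :=
    tendsto_integral_filter_of_dominated_convergence G (.of_forall fun k => (ht k).1)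
      (.of_forall fun k => .of_forall fun y => (Real.norm_eq_abs _).trans_le (hGbound k y)) hG
      (.of_forall hlim)
  simp only [hP.FP_mSum hmN W (ht _), hP.FP_mSum hmN W hv]
  exact (tendsto_const_nhds.mul hint).neg.rexp.div ((ENNReal.tendsto_toReal hZ_ne_top).comp hZ)
    (ENNReal.toReal_ne_zero.mpr ⟨hZ_ne_zero, hZ_ne_top⟩)

end Continuity

lemma abs_max_neg_le_abs {x b : ℝ} (hb : 0 ≤ b) : |max x (-b)| ≤ |x| :=
  abs_le.2 ⟨(neg_abs_le x).trans (le_max_left _ _),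
    max_le (le_abs_self x) ((neg_nonpos.2 hb).trans (abs_nonneg x))⟩

lemma abs_min_le_abs {x a : ℝ} (ha : 0 ≤ a) : |min x a| ≤ |x| :=
  abs_le.2 ⟨le_min (neg_abs_le x) ((neg_nonpos.2 (abs_nonneg x)).trans ha),
    (min_le_left _ _).trans (le_abs_self x)⟩

lemma MeasureTheory.Integrable.mono_of_abs_le {α : Type*} [MeasurableSpace α] {ν : Measure α}
    {f g : α → ℝ} (hg : Integrable g ν) (hf : AEStronglyMeasurable f ν) (h : ∀ x, |f x| ≤ |g x|) :
    Integrable f ν :=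
  hg.mono hf (.of_forall fun x => by simpa only [Real.norm_eq_abs] using h x)

lemma neg_le_min_max {x a b : ℝ} (ha : 0 ≤ a) (hb : 0 ≤ b) : -b ≤ min (max x (-b)) a :=
  le_min (le_max_right _ _) ((neg_nonpos.2 hb).trans ha)

lemma abs_min_max_le_add {x a b : ℝ} (ha : 0 ≤ a) (hb : 0 ≤ b) : |min (max x (-b)) a| ≤ a + b :=
  abs_le.2 ⟨by linarith [neg_le_min_max (x := x) ha hb], by linarith [min_le_right (max x (-b)) a]⟩

lemma memVrho_add_mSum {μ : Measure Λ} {N m : ℕ} {hmN : m ≤ N} {P W U : (Fin N → Λ) → ℝ}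
    {u : (Fin m → Λ) → ℝ}
    (hUexp : Integrable (fun x => exp (-U x)) (Wmeas μ N W)) (hU : HasSumStruct μ N m U u)
    (huρ : Integrable u (rhomeas μ N m hmN P)) {ξ : (Fin m → Λ) → ℝ} (hξsymm : IsSymm' m ξ)
    (hξ : Measurable ξ) (hξρ : Integrable ξ (rhomeas μ N m hmN P)) {c : ℝ}
    (hξc : ∀ y, -c ≤ ξ y) :
    memVrho μ N m hmN P W (fun x => U x + mSum N m ξ x) := by
  obtain ⟨husymm, hu, hUae⟩ := hU
  refine ⟨?_, fun y => u y + ξ y,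
    ⟨fun σ x => by simp only [husymm σ x, hξsymm σ x], hu.add hξ,
      hUae.mono fun x hx => by simp only [hx, mSum_add]⟩, huρ.add hξρ⟩
  refine (hUexp.mul_const (exp (N.choose m * c))).mono' ?_ (.of_forall fun x => ?_)
  · refine (hUexp.1.mul (measurable_mSum hξ).neg.exp.aestronglyMeasurable).congr
      (.of_forall fun x => ?_)
    simp only [Pi.mul_apply, Pi.neg_apply, ← exp_add, neg_add]
  · have hlow : mSum N m (fun _ => -c) x ≤ mSum N m ξ x := mSum_mono hξc x
    rw [mSum_const] at hlow
    rw [Real.norm_of_nonneg (exp_pos _).le, ← exp_add]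
    exact exp_le_exp.mpr (by linarith)

section Truncation

variable {μ : Measure Λ} [SigmaFinite μ] {N m : ℕ} (hmN : m ≤ N) {P W : (Fin N → Λ) → ℝ}
  {u w : (Fin m → Λ) → ℝ}

theorem IsSymmDensity.tendsto_FP_mSum_add_max (hP : IsSymmDensity μ N P) (hμ : μ ≠ 0)
    (hWmeas : Measurable W) (hu : Measurable u) (hw : Measurable w)
    (huρ : Integrable u (rhomeas μ N m hmN P)) (hwρ : Integrable w (rhomeas μ N m hmN P))
    (hZ : ZE μ N W (mSum N m fun y => u y + w y) ≠ ∞) :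
    Tendsto (fun b : ℕ => FP μ N P W (mSum N m fun y => u y + max (w y) (-b))) atTop
      (𝓝 (FP μ N P W (mSum N m fun y => u y + w y))) := by
  refine hP.tendsto_FP_mSum hmN hμ hWmeas (fun b => hu.add (hw.max measurable_const))
    (fun b => huρ.add (hwρ.mono_of_abs_le (hw.max measurable_const).aestronglyMeasurable
      fun y => abs_max_neg_le_abs b.cast_nonneg))
    (huρ.add hwρ) (fun y => ?_) (huρ.abs.add hwρ.abs)
    (fun b y => (abs_add_le _ _).trans (add_le_add le_rfl (abs_max_neg_le_abs b.cast_nonneg)))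
    hZ (fun b x => ?_)
  · refine tendsto_const_nhds.add (tendsto_const_nhds.congr' ?_)
    filter_upwards [tendsto_natCast_atTop_atTop.eventually_ge_atTop (-w y)] with b hb
    exact (max_eq_left (neg_le.mp hb)).symm
  · refine ENNReal.ofReal_le_ofReal (exp_le_exp.mpr (sub_le_sub_right (neg_le_neg ?_) _))
    exact mSum_mono (fun y => add_le_add le_rfl (le_max_left _ _)) x

theorem IsSymmDensity.tendsto_FP_mSum_add_min (hP : IsSymmDensity μ N P) (hμ : μ ≠ 0)
    (hWmeas : Measurable W) (hu : Measurable u) (hw : Measurable w)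
    (huρ : Integrable u (rhomeas μ N m hmN P)) (hwρ : Integrable w (rhomeas μ N m hmN P))
    (hZ : ZE μ N W (mSum N m u) ≠ ∞) {c : ℝ} (hc : 0 ≤ c) (hwc : ∀ y, -c ≤ w y) :
    Tendsto (fun a : ℕ => FP μ N P W (mSum N m fun y => u y + min (w y) a)) atTop
      (𝓝 (FP μ N P W (mSum N m fun y => u y + w y))) := by
  refine hP.tendsto_FP_mSum hmN hμ hWmeas (fun a => hu.add (hw.min measurable_const))
    (fun a => huρ.add (hwρ.mono_of_abs_le (hw.min measurable_const).aestronglyMeasurable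
      fun y => abs_min_le_abs a.cast_nonneg))
    (huρ.add hwρ) (fun y => ?_) (huρ.abs.add hwρ.abs)
    (fun a y => (abs_add_le _ _).trans (add_le_add le_rfl (abs_min_le_abs a.cast_nonneg)))
    (D := fun x => ENNReal.ofReal (exp (N.choose m * c)) *
      ENNReal.ofReal (exp (-mSum N m u x - W x)))
    ?_ (fun a x => ?_)
  · refine tendsto_const_nhds.add (tendsto_const_nhds.congr' ?_)
    filter_upwards [tendsto_natCast_atTop_atTop.eventually_ge_atTop (w y)] with a ha
    exact (min_eq_left ha).symm
  · rw [lintegral_const_mul' _ _ ENNReal.ofReal_ne_top]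
    exact ENNReal.mul_ne_top ENNReal.ofReal_ne_top hZ
  · rw [← ENNReal.ofReal_mul (exp_pos _).le, ← exp_add]
    refine ENNReal.ofReal_le_ofReal (exp_le_exp.mpr ?_)
    have hlow : mSum N m (fun _ => -c) x ≤ mSum N m (fun y => min (w y) a) x :=
      mSum_mono (fun y => le_min (hwc y) ((neg_nonpos.2 hc).trans a.cast_nonneg)) x
    rw [mSum_const] at hlow
    rw [mSum_add]
    linarith

theorem IsSymmDensity.exists_dist_FP_truncate_lt (hP : IsSymmDensity μ N P) (hμ : μ ≠ 0)
    (hWmeas : Measurable W) (hu : Measurable u) (hw : Measurable w)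
    (huρ : Integrable u (rhomeas μ N m hmN P)) (hwρ : Integrable w (rhomeas μ N m hmN P))
    (hZu : ZE μ N W (mSum N m u) ≠ ∞) (hZuw : ZE μ N W (mSum N m fun y => u y + w y) ≠ ∞)
    {ε : ℝ} (hε : 0 < ε) :
    ∃ b a : ℕ, dist (FP μ N P W (mSum N m fun y => u y + min (max (w y) (-b)) a))
      (FP μ N P W (mSum N m fun y => u y + w y)) < ε := by
  obtain ⟨b, hb⟩ := (Metric.tendsto_nhds.mp (hP.tendsto_FP_mSum_add_max hmN hμ hWmeas hu hw
    huρ hwρ hZuw) (ε / 2) (half_pos hε)).exists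
  have hwb : Measurable fun y => max (w y) (-b) := hw.max measurable_const
  have hwbρ : Integrable (fun y => max (w y) (-b)) (rhomeas μ N m hmN P) :=
    hwρ.mono_of_abs_le hwb.aestronglyMeasurable fun y => abs_max_neg_le_abs b.cast_nonneg
  obtain ⟨a, ha⟩ := (Metric.tendsto_nhds.mp (hP.tendsto_FP_mSum_add_min hmN hμ hWmeas hu hwb
    huρ hwbρ hZu b.cast_nonneg fun y => le_max_right _ _) (ε / 2) (half_pos hε)).exists
  exact ⟨b, a, (dist_triangle _ _ _).trans_lt (add_halves ε ▸ add_lt_add ha hb)⟩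

end Truncation

theorem statement15_general (μ : Measure Λ) [SigmaFinite μ] (hμ : μ ≠ 0)
    (N m : ℕ) (hmN : m ≤ N)
    (P W : (Fin N → Λ) → ℝ) (hPmeas : Measurable P)
    (hPprob : ∫⁻ x, ENNReal.ofReal (P x) ∂(pm μ N) = 1)
    (hPpos : ∀ᵐ x ∂(pm μ N), 0 < P x)
    (hPsymm : ∀ σ : Equiv.Perm (Fin N), ∀ᵐ x ∂(pm μ N), P (x ∘ σ) = P x)
    (hWmeas : Measurable W)
    (U V : (Fin N → Λ) → ℝ)
    (hU : memVrho μ N m hmN P W U) (hV : memVrho μ N m hmN P W V)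
    (ε : ℝ) (hε : 0 < ε) :
    ∃ ξ : (Fin m → Λ) → ℝ, IsSymm' m ξ ∧ Measurable ξ ∧
      (∃ C : ℝ, ∀ y, |ξ y| ≤ C) ∧
      memVrho μ N m hmN P W (fun x => U x + mSum N m ξ x) ∧
      |FP μ N P W V - FP μ N P W (fun x => U x + mSum N m ξ x)| < ε := by
  have hP : IsSymmDensity μ N P :=
    ⟨hPmeas, hPprob ▸ ENNReal.one_ne_top, hPpos.mono fun _ h => h.le, hPsymm⟩
  obtain ⟨hUexp, u, ⟨husymm, hu, hUae⟩, huρ⟩ := hU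
  obtain ⟨hVexp, v, ⟨hvsymm, hv, hVae⟩, hvρ⟩ := hV
  have huv : (fun y => u y + (v - u) y) = v := funext fun y => add_sub_cancel (u y) (v y)
  have hZU : ZE μ N W (mSum N m u) ≠ ∞ := ZE_congr hUae ▸ ZE_ne_top hWmeas hUexp
  have hZV : ZE μ N W (mSum N m fun y => u y + (v - u) y) ≠ ∞ := by
    rw [huv, ← ZE_congr hVae]
    exact ZE_ne_top hWmeas hVexp
  obtain ⟨b, a, hba⟩ := hP.exists_dist_FP_truncate_lt hmN hμ hWmeas hu (hv.sub hu) huρ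
    (hvρ.sub huρ) hZU hZV hε
  set ξ : (Fin m → Λ) → ℝ := fun y => min (max ((v - u) y) (-b)) a
  have hξm : Measurable ξ := ((hv.sub hu).max measurable_const).min measurable_const
  have hξρ : Integrable ξ (rhomeas μ N m hmN P) :=
    (hvρ.sub huρ).mono_of_abs_le hξm.aestronglyMeasurable fun y =>
      (abs_min_le_abs a.cast_nonneg).trans (abs_max_neg_le_abs b.cast_nonneg)
  have hξsymm : IsSymm' m ξ := fun σ x => by simp only [ξ, Pi.sub_apply, husymm σ x, hvsymm σ x]
  have hUξ : (fun x => U x + mSum N m ξ x) =ᵐ[pm μ N] mSum N m fun y => u y + ξ y :=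
    hUae.mono fun x hx => by simp only [hx, mSum_add]
  refine ⟨ξ, hξsymm, hξm, ⟨a + b, fun y => abs_min_max_le_add a.cast_nonneg b.cast_nonneg⟩,
    memVrho_add_mSum hUexp ⟨husymm, hu, hUae⟩ huρ hξsymm hξm hξρ
      fun y => neg_le_min_max a.cast_nonneg b.cast_nonneg, ?_⟩
  rw [FP_congr P hVae, FP_congr P hUξ, ← huv, ← Real.dist_eq, dist_comm]
  exact hba

/-- For `U, V ∈ V_{ρ^{(m)}}` and `ε > 0` there is a bounded symmetric
measurable `ξ : Λ^m → ℝ` such that, with `Ξ` the associated `m`-sum,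
`U + Ξ ∈ V_{ρ^{(m)}}` and `|F_P(V) − F_P(U + Ξ)| < ε`. -/
theorem statement15 (μ : Measure Λ) [SigmaFinite μ] (hμ : μ ≠ 0)
    (N m : ℕ) (hN : 2 ≤ N) (hm : 1 ≤ m) (hmN : m ≤ N)
    (P W : (Fin N → Λ) → ℝ) (hPmeas : Measurable P)
    (hPprob : ∫⁻ x, ENNReal.ofReal (P x) ∂(pm μ N) = 1)
    (hPpos : ∀ᵐ x ∂(pm μ N), 0 < P x)
    (hPsymm : ∀ σ : Equiv.Perm (Fin N), ∀ᵐ x ∂(pm μ N), P (x ∘ σ) = P x)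
    (hWmeas : Measurable W)
    (U V : (Fin N → Λ) → ℝ)
    (hU : memVrho μ N m hmN P W U) (hV : memVrho μ N m hmN P W V)
    (ε : ℝ) (hε : 0 < ε) :
    ∃ ξ : (Fin m → Λ) → ℝ, IsSymm' m ξ ∧ Measurable ξ ∧
      (∃ C : ℝ, ∀ y, |ξ y| ≤ C) ∧
      memVrho μ N m hmN P W (fun x => U x + mSum N m ξ x) ∧
      |FP μ N P W V - FP μ N P W (fun x => U x + mSum N m ξ x)| < ε :=
  statement15_general μ hμ N m hmN P W hPmeas hPprob hPpos hPsymm hWmeas U V hU hV ε hε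
end
end
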